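/- arXiv:2201.13450 — 2 statements merged into one kernel-verified Lean document; each statement's English description precedes it below -/
import Mathlib

section
/- Let q, n, s be positive integers with 2s ≤ q, and let C = {x ∈ (ZMod q)^n : each coordinate of x has a representative in {−s+1, …, s}} be the discrete cube of side length 2s centered at 0. For Δ ∈ (ZMod q)^n, the number of points in C ∩ (C + Δ) is at least (2s − ‖Δ‖_q)^n when ‖Δ‖_q ≤ 2s, where ‖Δ‖_q is the modular Euclidean norm. -/
/-- The modular norm on `(ZMod q)^n`: the infimum of the Euclidean norms of integer lifts. -/
noncomputable def modNorm (q n : ℕ) (y : Fin n → ZMod q) : ℝ :=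
  sInf {r : ℝ | ∃ a : Fin n → ℤ, (∀ i, ((a i : ZMod q) = y i)) ∧
    r = Real.sqrt (∑ i, ((a i : ℝ)) ^ 2)}

/-- The zero-centered discrete cube of side length `2s` in `(ZMod q)^n`. -/
def cubeSet (q n : ℕ) (s : ℕ) : Set (Fin n → ZMod q) :=
  {x | ∀ i, ∃ a : ℤ, ((a : ZMod q) = x i) ∧ -(s : ℤ) + 1 ≤ a ∧ a ≤ s}

/-!
The intersection splits coordinatewise into the one-dimensional overlaps `I ∩ (I + Δᵢ)` of the
interval `I = [-s + 1, s]` mod `q`. Lifting `Δᵢ` to its centred representative `dᵢ`, this overlap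
contains the images of the `2s - |dᵢ|` integers `a` with `a, a - dᵢ ∈ [-s + 1, s]`, which stay
distinct mod `q` because `2s ≤ q`. The centred representatives form the shortest lift of `Δ`,
so `|dᵢ| ≤ ‖Δ‖_q`, and the product of the factors is at least `(2s - ‖Δ‖_q)^n`.
-/

namespace ZMod

theorem abs_valMinAbs_le {q : ℕ} {x : ZMod q} {a : ℤ} (ha : (a : ZMod q) = x) :
    |x.valMinAbs| ≤ |a| := by
  rcases q.eq_zero_or_pos with rfl | hq
  · subst ha
    exact le_rfl
  · have : NeZero q := ⟨hq.ne'⟩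
    rw [Int.abs_eq_natAbs, Int.abs_eq_natAbs, Nat.cast_le]
    exact natAbs_min_of_le_div_two q _ a (by rw [coe_valMinAbs, ha]) (natAbs_valMinAbs_le x)

end ZMod

theorem modNorm_eq_sqrt_sum_valMinAbs {q n : ℕ} (y : Fin n → ZMod q) :
    modNorm q n y = √(∑ i, ((y i).valMinAbs : ℝ) ^ 2) := by
  refine IsLeast.csInf_eq ⟨⟨fun i => (y i).valMinAbs, fun i => ZMod.coe_valMinAbs _, rfl⟩, ?_⟩
  rintro r ⟨a, ha, rfl⟩
  refine Real.sqrt_le_sqrt (Finset.sum_le_sum fun i _ => ?_)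
  exact sq_le_sq.mpr (by exact_mod_cast ZMod.abs_valMinAbs_le (ha i))

theorem abs_valMinAbs_le_modNorm {q n : ℕ} (y : Fin n → ZMod q) (i : Fin n) :
    |((y i).valMinAbs : ℝ)| ≤ modNorm q n y := by
  rw [modNorm_eq_sqrt_sum_valMinAbs, ← Real.sqrt_sq_eq_abs]
  gcongr
  exact Finset.single_le_sum (f := fun j => ((y j).valMinAbs : ℝ) ^ 2)
    (fun j _ => sq_nonneg _) (Finset.mem_univ i)

def centeredInterval (q s : ℕ) : Set (ZMod q) :=
  Int.cast '' Set.Icc (-(s : ℤ) + 1) s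

theorem cubeSet_eq_pi (q n s : ℕ) :
    cubeSet q n s = Set.univ.pi fun _ => centeredInterval q s := by
  ext x
  simp [cubeSet, centeredInterval, and_comm]

theorem Set.image_add_const_univ_pi {ι : Type*} {G : ι → Type*} [∀ i, AddGroup (G i)]
    (t : ∀ i, Set (G i)) (y : ∀ i, G i) :
    (· + y) '' Set.univ.pi t = Set.univ.pi fun i => (· + y i) '' t i := by
  ext x
  simp [Set.image_add_right, Set.mem_pi]

theorem Nat.card_univ_pi {ι : Type*} [Fintype ι] {α : ι → Type*} (t : ∀ i, Set (α i)) :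
    Nat.card (Set.univ.pi t) = ∏ i, Nat.card (t i) :=
  (Nat.card_congr (Equiv.Set.univPi t)).trans Nat.card_pi

theorem sub_abs_le_natCard_centeredInterval_inter {q s : ℕ} (hsq : 2 * s ≤ q) (d : ℤ) :
    2 * s - |d| ≤
      (Nat.card ↥(centeredInterval q s ∩ (· + (d : ZMod q)) '' centeredInterval q s) : ℤ) := by
  -- the integers `a` with `a, a - d ∈ [-s + 1, s]`: fewer than `q`, so distinct mod `q`
  set J := Finset.Icc (max (-(s : ℤ) + 1) (-s + 1 + d)) (min (s : ℤ) (s + d))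
  have hJ : 2 * s - |d| ≤ (J.card : ℤ) := by
    rw [Int.card_Icc]
    rcases abs_cases d with ⟨h, _⟩ | ⟨h, _⟩ <;> omega
  have hinj : Set.InjOn (Int.cast : ℤ → ZMod q) J := by
    intro a ha b hb hab
    simp only [Finset.coe_Icc, Set.mem_Icc, J] at ha hb
    have hdvd : (q : ℤ) ∣ a - b := (ZMod.intCast_eq_intCast_iff_dvd_sub b a q).mp hab.symm
    have := Int.eq_zero_of_abs_lt_dvd hdvd (abs_lt.mpr ⟨by omega, by omega⟩)
    omega
  have hsub : ((J.image Int.cast : Finset (ZMod q)) : Set (ZMod q)) ⊆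
      centeredInterval q s ∩ (· + (d : ZMod q)) '' centeredInterval q s := by
    intro x hx
    simp only [Finset.coe_image, Finset.coe_Icc, Set.mem_image, Set.mem_Icc, J] at hx
    obtain ⟨a, ha, rfl⟩ := hx
    refine ⟨⟨a, ⟨by omega, by omega⟩, rfl⟩, ⟨(a - d : ℤ), ⟨a - d, ⟨by omega, by omega⟩, rfl⟩, ?_⟩⟩
    push_cast
    ring
  have hfin : (centeredInterval q s ∩ (· + (d : ZMod q)) '' centeredInterval q s).Finite :=
    ((Set.finite_Icc _ _).image _).inter_of_left _
  calc 2 * s - |d| ≤ (J.card : ℤ) := hJ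
    _ = ((J.image Int.cast : Finset (ZMod q)).card : ℤ) := by rw [Finset.card_image_of_injOn hinj]
    _ ≤ _ := by
      rw [Nat.card_coe_set_eq, ← Set.ncard_coe_finset]
      exact_mod_cast Set.ncard_le_ncard hsub hfin

theorem stmt_10_general (q n s : ℕ) (hsq : 2 * s ≤ q)
    (Δ : Fin n → ZMod q) (hΔ : modNorm q n Δ ≤ 2 * s) :
    ((2 * (s : ℝ) - modNorm q n Δ) ^ n : ℝ) ≤
      Nat.card ↥(cubeSet q n s ∩ ((· + Δ) '' cubeSet q n s)) := by
  have hfactor (i : Fin n) : 2 * (s : ℝ) - modNorm q n Δ ≤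
      Nat.card ↥(centeredInterval q s ∩ (· + Δ i) '' centeredInterval q s) := by
    have h := sub_abs_le_natCard_centeredInterval_inter hsq (Δ i).valMinAbs
    rw [ZMod.coe_valMinAbs] at h
    have hcast : (2 * s - |((Δ i).valMinAbs : ℝ)|) ≤
        Nat.card ↥(centeredInterval q s ∩ (· + Δ i) '' centeredInterval q s) := by
      exact_mod_cast h
    linarith [abs_valMinAbs_le_modNorm Δ i]
  rw [cubeSet_eq_pi, Set.image_add_const_univ_pi, ← Set.pi_inter_distrib, Nat.card_univ_pi]
  push_cast
  calc (2 * (s : ℝ) - modNorm q n Δ) ^ n = ∏ _i : Fin n, (2 * (s : ℝ) - modNorm q n Δ) := by simp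
    _ ≤ _ := Finset.prod_le_prod (fun _ _ => by linarith) (fun i _ => hfactor i)

/-- The overlap of a cube with its shift by `Δ` contains at least `(2s - ‖Δ‖_q)^n` points,
provided `‖Δ‖_q ≤ 2s`. -/
theorem stmt_10 (q n s : ℕ) (hq : 0 < q) (hn : 0 < n) (hs : 0 < s) (hsq : 2 * s ≤ q)
    (Δ : Fin n → ZMod q) (hΔ : modNorm q n Δ ≤ 2 * s) :
    ((2 * (s : ℝ) - modNorm q n Δ) ^ n : ℝ) ≤
      Nat.card ↥(cubeSet q n s ∩ ((· + Δ) '' cubeSet q n s)) :=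
  stmt_10_general q n s hsq Δ hΔ
end

section
/- Let r₁, …, r_n be positive reals, R ⊆ {1,…,n} a subset, and positive reals v₁, …, v_n satisfying: (a) v₁···v_n ≥ (∏_{j∉R} r_j) (i.e., the product r₁···r_n / ∏_{j∈R} r_j is at most v₁···v_n), (b) v₁···v_i ≤ r₁···r_i for all i, and (c) v_{i+1}···v_n ≤ r_{i+1}···r_n for all i. Then for all 1 ≤ m ≤ i ≤ n: r_{i−m+1}···r_i / ∏_{j∈R} r_j ≤ v_{i−m+1}···v_i. -/
/-!
Split `1..n` into the blocks `1..i-m`, the window `i-m+1..i` and `i+1..n`. By (a) and (b), (c),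
`∏ r = (∏_{j∉R} r) (∏_R r) ≤ (∏ v) (∏_R r) ≤ (∏_{≤i-m} r) (∏_{window} v) (∏_{>i} r) (∏_R r)`,
and cancelling the two outer blocks of `r` leaves the claim.
-/

open Finset

theorem Finset.prod_Icc_one_eq_mul_mul {M : Type*} [CommMonoid M] (f : ℕ → M) {a b c : ℕ}
    (hab : a ≤ b) (hbc : b ≤ c) :
    ∏ j ∈ Icc 1 c, f j =
      (∏ j ∈ Icc 1 a, f j) * (∏ j ∈ Icc (a + 1) b, f j) * ∏ j ∈ Icc (b + 1) c, f j := by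
  have Icc_one_eq_Ioc_zero (x : ℕ) : Icc 1 x = Ioc 0 x := Icc_add_one_left_eq_Ioc 0 x
  rw [Icc_add_one_left_eq_Ioc, Icc_add_one_left_eq_Ioc, Icc_one_eq_Ioc_zero, Icc_one_eq_Ioc_zero,
    prod_Ioc_consecutive _ (Nat.zero_le a) hab,
    prod_Ioc_consecutive _ (Nat.zero_le b) hbc]

theorem div_le_of_mul_mul_eq_mul {K : Type*} [Field K] [LinearOrder K] [IsStrictOrderedRing K]
    {A B C a b c S P : K} (hA : 0 < A) (hC : 0 < C) (hb : 0 ≤ b) (hc : 0 ≤ c) (hP : 0 < P)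
    (haA : a ≤ A) (hcC : c ≤ C) (hS : S ≤ a * b * c) (hsplit : A * B * C = S * P) :
    B / P ≤ b := by
  rw [div_le_iff₀ hP]
  refine le_of_mul_le_mul_left ?_ (mul_pos hA hC)
  calc A * C * B = S * P := by rw [← hsplit]; ring
    _ ≤ a * b * c * P := by gcongr
    _ ≤ A * b * C * P := by gcongr
    _ = A * C * (b * P) := by ring

/-- Product-telescoping inequality from the analysis of LLL on rectangle-periodic lattices:
under (a) `∏_{j∉R} r_j ≤ ∏_j v_j`, (b) `∏_{j≤i} v_j ≤ ∏_{j≤i} r_j`, and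
(c) `∏_{j>i} v_j ≤ ∏_{j>i} r_j`, one has
`(∏_{j=i-m+1}^{i} r_j) / ∏_{j∈R} r_j ≤ ∏_{j=i-m+1}^{i} v_j` for all `1 ≤ m ≤ i ≤ n`. -/
theorem stmt_19 (n : ℕ) (r v : ℕ → ℝ) (R : Finset ℕ) (hR : R ⊆ Finset.Icc 1 n)
    (hrpos : ∀ i ∈ Finset.Icc 1 n, 0 < r i)
    (hvpos : ∀ i ∈ Finset.Icc 1 n, 0 < v i)
    (ha : (∏ j ∈ (Finset.Icc 1 n) \ R, r j) ≤ ∏ j ∈ Finset.Icc 1 n, v j)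
    (hb : ∀ i ≤ n, (∏ j ∈ Finset.Icc 1 i, v j) ≤ ∏ j ∈ Finset.Icc 1 i, r j)
    (hc : ∀ i ≤ n, (∏ j ∈ Finset.Icc (i + 1) n, v j) ≤ ∏ j ∈ Finset.Icc (i + 1) n, r j) :
    ∀ m i, 1 ≤ m → m ≤ i → i ≤ n →
      (∏ j ∈ Finset.Icc (i - m + 1) i, r j) / (∏ j ∈ R, r j) ≤
        ∏ j ∈ Finset.Icc (i - m + 1) i, v j := by
  intro m i _ _ hin
  have hki : i - m ≤ i := Nat.sub_le i m
  have prod_pos_of_subset : ∀ f : ℕ → ℝ, (∀ j ∈ Icc 1 n, 0 < f j) →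
      ∀ s ⊆ Icc 1 n, 0 < ∏ j ∈ s, f j :=
    fun f hf s hs => prod_pos fun j hj => hf j (hs hj)
  have hlow : Icc 1 (i - m) ⊆ Icc 1 n := Icc_subset_Icc le_rfl (hki.trans hin)
  have hmid : Icc (i - m + 1) i ⊆ Icc 1 n := Icc_subset_Icc (Nat.le_add_left 1 _) hin
  have hhigh : Icc (i + 1) n ⊆ Icc 1 n := Icc_subset_Icc (Nat.le_add_left 1 i) le_rfl
  refine div_le_of_mul_mul_eq_mul (S := ∏ j ∈ Icc 1 n \ R, r j)
    (prod_pos_of_subset r hrpos _ hlow) (prod_pos_of_subset r hrpos _ hhigh) (prod_pos_of_subset v hvpos _ hmid).le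
    (prod_pos_of_subset v hvpos _ hhigh).le (prod_pos_of_subset r hrpos R hR)
    (hb (i - m) (hki.trans hin)) (hc i hin) ?_ ?_
  · rwa [← prod_Icc_one_eq_mul_mul v hki hin]
  · rw [← prod_Icc_one_eq_mul_mul r hki hin, prod_sdiff hR]
end
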